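/- Let (X,d) be a metric space whose underlying set X is finite with |X| = n ≥ 2, and suppose (X,d) satisfies the tie-breaking rule. Then (X,d) satisfies the three-point condition if and only if there exists an enumeration x₁, x₂, …, x_n of X (a bijection from {1,…,n} to X) such that for all 1 ≤ i ≤ j ≤ n, d(xᵢ, x_j) = ∑_{k=i}^{j−1} d(x_k, x_{k+1}); moreover, in that case d(x₁, x_n) = max{d(u,v) : u,v ∈ X}, i.e., the endpoints of the realising path are the two farthest points of X. -/

import Mathlib

/-! If `a, b` is a farthest pair, the three-point condition puts every point between `a` and `b`,
and then `x ↦ dist a x` is an isometric embedding into `ℝ`: the three-point condition for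
`x, y, a` and for `x, y, b` leaves `dist x y = dist a b` as the only alternative, which the
tie-breaking rule reserves for `{x, y} = {a, b}`. Listing `X` in the order of this embedding gives
the path. Conversely, along a path `x ↦ dist x₁ x` is an isometric embedding into `ℝ`, and the
three-point condition holds in `ℝ`. -/

/-- The tie-breaking rule: distances of distinct unordered pairs are distinct. -/
def TieBreakingRule (X : Type*) [MetricSpace X] : Prop :=
  ∀ x y u v : X, x ≠ y → u ≠ v → ({x, y} : Set X) ≠ {u, v} → dist x y ≠ dist u v

/-- The three-point condition. -/
def ThreePointCondition (X : Type*) [MetricSpace X] : Prop :=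
  ∀ x y z : X, max (dist x y) (max (dist y z) (dist z x)) =
    (dist x y + dist y z + dist z x) / 2

theorem Fin.sum_Ico_add_one_sub {M : Type*} [AddCommGroup M] {n : ℕ} (h : 1 < n)
    (F : Fin n → M) {i j : Fin n} (hij : i ≤ j) :
    ∑ k ∈ Finset.Ico i j, (F (k + ⟨1, h⟩) - F k) = F j - F i := by
  -- reducing mod `n` matches addition in `Fin n`, so that `hG_succ` holds by `rfl`
  let G : ℕ → M := fun m => F ⟨m % n, Nat.mod_lt _ (by omega)⟩
  have hG : ∀ k : Fin n, G k = F k := fun k => congrArg F (Fin.ext (Nat.mod_eq_of_lt k.isLt))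
  have hG_succ : ∀ k : Fin n, G (k + 1) = F (k + ⟨1, h⟩) := fun k => congrArg F (Fin.ext rfl)
  calc ∑ k ∈ Finset.Ico i j, (F (k + ⟨1, h⟩) - F k)
      = ∑ m ∈ Finset.Ico (i : ℕ) j, (G (m + 1) - G m) := by
        rw [← Fin.map_valEmbedding_Ico, Finset.sum_map]
        exact Finset.sum_congr rfl fun k _ => by simp only [Fin.valEmbedding_apply, hG, hG_succ]
    _ = F j - F i := by rw [Finset.sum_Ico_sub G hij, hG, hG]

theorem ThreePointCondition.real : ThreePointCondition ℝ := by
  intro p q r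
  simp only [Real.dist_eq]
  rcases abs_cases (p - q) with ⟨h₁, h₁'⟩ | ⟨h₁, h₁'⟩ <;>
  rcases abs_cases (q - r) with ⟨h₂, h₂'⟩ | ⟨h₂, h₂'⟩ <;>
  rcases abs_cases (r - p) with ⟨h₃, h₃'⟩ | ⟨h₃, h₃'⟩ <;>
  simp only [max_def] <;> split_ifs <;> linarith

theorem Isometry.threePointCondition {X Y : Type*} [MetricSpace X] [MetricSpace Y] {f : X → Y}
    (hf : Isometry f) (hY : ThreePointCondition Y) : ThreePointCondition X := by
  intro x y z
  simpa only [hf.dist_eq] using hY (f x) (f y) (f z)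

theorem TieBreakingRule.pair_eq_of_dist_eq {X : Type*} [MetricSpace X] (htie : TieBreakingRule X)
    {x y u v : X} (hxy : x ≠ y) (h : dist x y = dist u v) : ({x, y} : Set X) = {u, v} := by
  by_contra hne
  have huv : u ≠ v := by
    rintro rfl
    exact hxy (dist_eq_zero.mp (h.trans (dist_self u)))
  exact htie x y u v hxy huv hne h

namespace ThreePointCondition

variable {X : Type*} [MetricSpace X]

theorem dist_eq_abs_sub_or_eq_add (htpc : ThreePointCondition X) (x y z : X) :
    dist x y = |dist z x - dist z y| ∨ dist x y = dist z x + dist z y := by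
  have h := htpc x y z
  have := dist_nonneg (x := x) (y := y)
  rw [dist_comm y z] at h
  rcases max_choice (dist x y) (max (dist z y) (dist z x)) with hmax | hmax <;> rw [hmax] at h
  · exact .inr (by linarith)
  rcases max_choice (dist z y) (dist z x) with hmax' | hmax' <;> rw [hmax'] at h
  · exact .inl (by rw [abs_of_nonpos (by linarith)]; linarith)
  · exact .inl (by rw [abs_of_nonneg (by linarith)]; linarith)

theorem dist_add_dist_eq_of_forall_dist_le (htpc : ThreePointCondition X) {a b : X}
    (hmax : ∀ u v : X, dist u v ≤ dist a b) (x : X) : dist a x + dist x b = dist a b := by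
  have hxa := hmax x a
  have hxb := hmax x b
  rw [dist_comm a x]
  rcases htpc.dist_eq_abs_sub_or_eq_add a b x with h | h
  · rcases abs_cases (dist x a - dist x b) with ⟨h', -⟩ | ⟨h', -⟩ <;>
      linarith [dist_nonneg (x := x) (y := a), dist_nonneg (x := x) (y := b)]
  · exact h.symm

theorem isometry_dist_of_forall_dist_le (htpc : ThreePointCondition X)
    (htie : TieBreakingRule X) {a b : X} (hmax : ∀ u v : X, dist u v ≤ dist a b) :
    Isometry (dist a) := by
  refine Isometry.of_dist_eq fun x y => ?_
  rw [Real.dist_eq]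
  have hx := htpc.dist_add_dist_eq_of_forall_dist_le hmax x
  have hy := htpc.dist_add_dist_eq_of_forall_dist_le hmax y
  rw [dist_comm x b] at hx
  rw [dist_comm y b] at hy
  rcases htpc.dist_eq_abs_sub_or_eq_add x y a with ha | ha
  · exact ha.symm
  rcases htpc.dist_eq_abs_sub_or_eq_add x y b with hb | hb
  · rw [hb, abs_sub_comm]
    congr 1
    linarith
  rcases eq_or_ne x y with rfl | hxy
  · simp
  have hD : dist x y = dist a b := by linarith
  rcases Set.pair_eq_pair_iff.mp (htie.pair_eq_of_dist_eq hxy hD) with ⟨hxa, hyb⟩ | ⟨hxb, hya⟩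
  · rw [hxa, hyb]
    simp
  · rw [hxb, hya]
    simp [dist_comm]

theorem exists_isometry_real [Finite X] (htpc : ThreePointCondition X)
    (htie : TieBreakingRule X) : ∃ f : X → ℝ, Isometry f := by
  cases isEmpty_or_nonempty X
  · exact ⟨fun _ => 0, isometry_subsingleton⟩
  obtain ⟨⟨a, b⟩, hab⟩ := Finite.exists_max fun p : X × X => dist p.1 p.2
  exact ⟨_, htpc.isometry_dist_of_forall_dist_le htie fun u v => hab (u, v)⟩

end ThreePointCondition

theorem Isometry.exists_equiv_fin_dist_eq_sub {X : Type*} [MetricSpace X] [Fintype X] {n : ℕ}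
    (hcard : Fintype.card X = n) {f : X → ℝ} (hf : Isometry f) :
    ∃ e : Fin n ≃ X, ∀ i j, i ≤ j → dist (e i) (e j) = f (e j) - f (e i) := by
  let : LinearOrder X := LinearOrder.lift' f hf.injective
  let e := monoEquivOfFin X hcard
  refine ⟨e.toEquiv, fun i j hij => ?_⟩
  change dist (e i) (e j) = f (e j) - f (e i)
  have hmono : f (e i) ≤ f (e j) := e.monotone hij
  rw [← hf.dist_eq, Real.dist_eq, abs_sub_comm, abs_of_nonneg (sub_nonneg.mpr hmono)]

section LineEnumeration

variable {ι X : Type*} [LinearOrder ι] [PseudoMetricSpace X]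

theorem monotone_of_dist_eq_sub {e : ι → X} {F : ι → ℝ}
    (hF : ∀ i j, i ≤ j → dist (e i) (e j) = F j - F i) : Monotone F :=
  fun i j hij => sub_nonneg.mp (hF i j hij ▸ dist_nonneg)

theorem isometry_comp_symm_of_dist_eq_sub {e : ι ≃ X} {F : ι → ℝ}
    (hF : ∀ i j, i ≤ j → dist (e i) (e j) = F j - F i) : Isometry (F ∘ e.symm) := by
  have key : ∀ i j, i ≤ j → dist (F i) (F j) = dist (e i) (e j) := fun i j hij => by
    rw [hF i j hij, Real.dist_eq, abs_sub_comm,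
      abs_of_nonneg (sub_nonneg.mpr (monotone_of_dist_eq_sub hF hij))]
  refine Isometry.of_dist_eq fun x y => ?_
  obtain ⟨i, rfl⟩ := e.surjective x
  obtain ⟨j, rfl⟩ := e.surjective y
  simp only [Function.comp_apply, Equiv.symm_apply_apply]
  rcases le_total i j with hij | hji
  · exact key i j hij
  · rw [dist_comm, key j i hji, dist_comm]

theorem dist_le_of_dist_eq_sub {e : ι ≃ X} {F : ι → ℝ}
    (hF : ∀ i j, i ≤ j → dist (e i) (e j) = F j - F i) {lo hi : ι} (hlo : ∀ i, lo ≤ i)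
    (hhi : ∀ i, i ≤ hi) (u v : X) : dist u v ≤ dist (e lo) (e hi) := by
  have hmono := monotone_of_dist_eq_sub hF
  have key : ∀ i j, i ≤ j → dist (e i) (e j) ≤ dist (e lo) (e hi) := fun i j hij => by
    rw [hF i j hij, hF lo hi (hlo hi)]
    linarith [hmono (hlo i), hmono (hhi j)]
  obtain ⟨i, rfl⟩ := e.surjective u
  obtain ⟨j, rfl⟩ := e.surjective v
  rcases le_total i j with hij | hji
  · exact key i j hij
  · rw [dist_comm]
    exact key j i hji

theorem Fin.dist_eq_sum_iff_exists_dist_eq_sub {n : ℕ} (h : 1 < n) (e : Fin n → X) :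
    (∀ i j : Fin n, i ≤ j →
        dist (e i) (e j) = ∑ k ∈ Finset.Ico i j, dist (e k) (e (k + ⟨1, h⟩))) ↔
      ∃ F : Fin n → ℝ, ∀ i j, i ≤ j → dist (e i) (e j) = F j - F i := by
  constructor
  · intro he
    let o : Fin n := ⟨0, by omega⟩
    have ho : ∀ i, o ≤ i := fun i => Nat.zero_le i
    refine ⟨fun i => dist (e o) (e i), fun i j hij => ?_⟩
    have hsplit := he o j (ho j)
    rw [← Finset.Ico_union_Ico_eq_Ico (ho i) hij,
      Finset.sum_union (Finset.Ico_disjoint_Ico_consecutive o i j), ← he o i (ho i),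
      ← he i j hij] at hsplit
    linarith
  · rintro ⟨F, hF⟩ i j hij
    rw [hF i j hij, ← Fin.sum_Ico_add_one_sub h F hij]
    refine Finset.sum_congr rfl fun k hk => (hF _ _ ?_).symm
    have hkj : (k : ℕ) < j := Finset.mem_Ico.mp hk |>.2
    rw [Fin.le_def, Fin.val_add, Fin.val_mk, Nat.mod_eq_of_lt (show (k : ℕ) + 1 < n by omega)]
    omega

end LineEnumeration

/-- Under the tie-breaking rule, a finite metric space on `n ≥ 2` points satisfies the
three-point condition iff there is an enumeration `e` of `X` along which all distances
decompose as sums of consecutive distances; moreover the endpoints of such an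
enumeration are the two farthest points of `X`. -/
theorem threePointCondition_iff_spanning_path
    {X : Type*} [MetricSpace X] [Fintype X] (n : ℕ) (hn : 2 ≤ n)
    (hcard : Fintype.card X = n) (htie : TieBreakingRule X) :
    (ThreePointCondition X ↔
      ∃ e : Fin n ≃ X, ∀ i j : Fin n, i ≤ j →
        dist (e i) (e j) = ∑ k ∈ Finset.Ico i j, dist (e k) (e (k + ⟨1, by omega⟩))) ∧
    (∀ e : Fin n ≃ X,
      (∀ i j : Fin n, i ≤ j →
        dist (e i) (e j) = ∑ k ∈ Finset.Ico i j, dist (e k) (e (k + ⟨1, by omega⟩))) →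
      ∀ u v : X, dist u v ≤ dist (e ⟨0, by omega⟩) (e ⟨n - 1, by omega⟩)) := by
  have h : 1 < n := by omega
  refine ⟨⟨fun htpc => ?_, fun ⟨e, he⟩ => ?_⟩, fun e he => ?_⟩
  · obtain ⟨f, hf⟩ := htpc.exists_isometry_real htie
    obtain ⟨e, he⟩ := hf.exists_equiv_fin_dist_eq_sub hcard
    exact ⟨e, (Fin.dist_eq_sum_iff_exists_dist_eq_sub h e).mpr ⟨f ∘ e, he⟩⟩
  · obtain ⟨F, hF⟩ := (Fin.dist_eq_sum_iff_exists_dist_eq_sub h e).mp he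
    exact (isometry_comp_symm_of_dist_eq_sub hF).threePointCondition ThreePointCondition.real
  · obtain ⟨F, hF⟩ := (Fin.dist_eq_sum_iff_exists_dist_eq_sub h e).mp he
    exact dist_le_of_dist_eq_sub hF (fun i => Nat.zero_le i)
      (fun i => Nat.le_sub_one_of_lt i.isLt)
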